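/- arXiv:2511.14355 — 2 statements merged into one kernel-verified Lean document; each statement's English description precedes it below -/
import Mathlib

section
/- Let ε > 0, v a divergence-free smooth vector field, and suppose ρ solves the Fokker-Planck equation ∂ₜρ + ∇·(ρ(∇λ + v)) = (ε/2)Δρ and λ solves ∂ₜλ + (1/2)‖∇λ‖² + ∇λ·v = -(ε/2)Δλ. Then φ̂ := ρ exp(-λ/ε) solves the forward equation ∂ₜφ̂ = -∇φ̂·v + (ε/2)Δφ̂. -/
/-- Spatial partial derivative in direction `i`. -/
noncomputable def pd {n : ℕ} (f : (Fin n → ℝ) → ℝ) (i : Fin n) (x : Fin n → ℝ) : ℝ :=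
  fderiv ℝ f x (Pi.single i 1)

/-- Laplacian as the sum of repeated partial derivatives. -/
noncomputable def lap {n : ℕ} (f : (Fin n → ℝ) → ℝ) (x : Fin n → ℝ) : ℝ :=
  ∑ i, pd (pd f i) i x

/-- Divergence of a vector field. -/
noncomputable def dvg {n : ℕ} (F : (Fin n → ℝ) → (Fin n → ℝ)) (x : Fin n → ℝ) : ℝ :=
  ∑ i, pd (fun y => F y i) i x

section helpers
variable {n : ℕ} {f g : (Fin n → ℝ) → ℝ} {i : Fin n} {x : Fin n → ℝ} {c : ℝ}

lemma contDiff_pd (hf : ContDiff ℝ (⊤ : ℕ∞) f) (i : Fin n) : ContDiff ℝ (⊤ : ℕ∞) (pd f i) := by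
  have h1 : ContDiff ℝ (⊤ : ℕ∞) (fderiv ℝ f) := hf.fderiv_right (by simp)
  exact (ContinuousLinearMap.apply ℝ ℝ (Pi.single i 1 : Fin n → ℝ)).contDiff.comp h1

lemma pd_add (hf : DifferentiableAt ℝ f x) (hg : DifferentiableAt ℝ g x) :
    pd (fun y => f y + g y) i x = pd f i x + pd g i x := by
  unfold pd
  rw [fderiv_fun_add hf hg]; rfl

lemma pd_mul (hf : DifferentiableAt ℝ f x) (hg : DifferentiableAt ℝ g x) :
    pd (fun y => f y * g y) i x = pd f i x * g x + f x * pd g i x := by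
  unfold pd
  rw [fderiv_fun_mul hf hg]
  simp only [ContinuousLinearMap.add_apply, ContinuousLinearMap.smul_apply, smul_eq_mul]
  ring

lemma pd_neg : pd (fun y => -f y) i x = -pd f i x := by
  unfold pd; rw [fderiv_fun_neg]; simp

lemma pd_div_const (hf : DifferentiableAt ℝ f x) :
    pd (fun y => f y / c) i x = pd f i x / c := by
  unfold pd
  rw [show (fun y => f y / c) = fun y => f y * c⁻¹ from funext fun y => div_eq_mul_inv _ _,
    fderiv_mul_const hf]
  simp [div_eq_mul_inv, mul_comm]

lemma pd_exp (hf : DifferentiableAt ℝ f x) :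
    pd (fun y => Real.exp (f y)) i x = Real.exp (f x) * pd f i x := by
  unfold pd
  rw [fderiv_exp hf]; simp

variable (ε : ℝ) (R L : (Fin n → ℝ) → ℝ) (hR : ContDiff ℝ (⊤ : ℕ∞) R) (hL : ContDiff ℝ (⊤ : ℕ∞) L)

lemma Dexp (hL : ContDiff ℝ (⊤ : ℕ∞) L) (j : Fin n) (y : Fin n → ℝ) :
    pd (fun z => Real.exp (-(L z) / ε)) j y
      = Real.exp (-(L y) / ε) * (-(pd L j y) / ε) := by
  rw [pd_exp (((hL.neg).div_const ε).differentiable (by simp) y),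
    pd_div_const ((hL.neg).differentiable (by simp) y), pd_neg]

lemma Dfirst (hR : ContDiff ℝ (⊤ : ℕ∞) R) (hL : ContDiff ℝ (⊤ : ℕ∞) L) (j : Fin n) (y : Fin n → ℝ) :
    pd (fun z => R z * Real.exp (-(L z) / ε)) j y
      = pd R j y * Real.exp (-(L y) / ε)
        + R y * (Real.exp (-(L y) / ε) * (-(pd L j y) / ε)) := by
  have hE : ContDiff ℝ (⊤ : ℕ∞) (fun z => Real.exp (-(L z) / ε)) :=
    Real.contDiff_exp.comp ((hL.neg).div_const ε)
  rw [pd_mul (hR.differentiable (by simp) y) (hE.differentiable (by simp) y), Dexp ε L hL]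

lemma Dsecond (hR : ContDiff ℝ (⊤ : ℕ∞) R) (hL : ContDiff ℝ (⊤ : ℕ∞) L) (j : Fin n) (y : Fin n → ℝ) :
    pd (pd (fun z => R z * Real.exp (-(L z) / ε)) j) j y
      = Real.exp (-(L y) / ε) *
          (pd (pd R j) j y - 2 * pd R j y * pd L j y / ε
            + R y * (pd L j y) ^ 2 / ε ^ 2 - R y * pd (pd L j) j y / ε) := by
  have hE : ContDiff ℝ (⊤ : ℕ∞) (fun z => Real.exp (-(L z) / ε)) :=
    Real.contDiff_exp.comp ((hL.neg).div_const ε)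
  have hRj : ContDiff ℝ (⊤ : ℕ∞) (pd R j) := contDiff_pd hR j
  have hLj : ContDiff ℝ (⊤ : ℕ∞) (pd L j) := contDiff_pd hL j
  have hGj : ContDiff ℝ (⊤ : ℕ∞) (fun y => -(pd L j y) / ε) := (hLj.neg).div_const ε
  have h1 : ContDiff ℝ (⊤ : ℕ∞) (fun y => pd R j y * Real.exp (-(L y) / ε)) := hRj.mul hE
  have h2 : ContDiff ℝ (⊤ : ℕ∞) (fun y => R y * (Real.exp (-(L y) / ε) * (-(pd L j y) / ε))) :=
    hR.mul (hE.mul hGj)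
  rw [show pd (fun z => R z * Real.exp (-(L z) / ε)) j
      = fun y => pd R j y * Real.exp (-(L y) / ε)
          + R y * (Real.exp (-(L y) / ε) * (-(pd L j y) / ε))
    from funext (Dfirst ε R L hR hL j)]
  rw [pd_add (h1.differentiable (by simp) y) (h2.differentiable (by simp) y),
    pd_mul (hRj.differentiable (by simp) y) (hE.differentiable (by simp) y),
    pd_mul (hR.differentiable (by simp) y) ((hE.mul hGj).differentiable (by simp) y),
    pd_mul (hE.differentiable (by simp) y) (hGj.differentiable (by simp) y),
    pd_div_const ((hLj.neg).differentiable (by simp) y), pd_neg,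
    Dexp ε L hL]
  ring

end helpers

/-- if `ρ > 0` solves the Fokker-Planck equation
`∂ₜρ + ∇·(ρ(∇λ + v)) = (ε/2)Δρ`, `λ` solves the HJB equation
`∂ₜλ + (1/2)‖∇λ‖² + ∇λ·v = -(ε/2)Δλ`, and `v` is divergence free, then
`φ̂ = ρ exp(-λ/ε)` solves `∂ₜφ̂ = -∇φ̂·v + (ε/2)Δφ̂`. -/
theorem stmt3 {n : ℕ} (ε : ℝ) (hε : 0 < ε)
    (ρ lam : (Fin n → ℝ) → ℝ → ℝ)
    (hρ : ContDiff ℝ (⊤ : ℕ∞) (fun p : (Fin n → ℝ) × ℝ => ρ p.1 p.2))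
    (hρpos : ∀ x t, 0 < ρ x t)
    (hlam : ContDiff ℝ (⊤ : ℕ∞) (fun p : (Fin n → ℝ) × ℝ => lam p.1 p.2))
    (v : (Fin n → ℝ) → ℝ → (Fin n → ℝ))
    (hv : ContDiff ℝ (⊤ : ℕ∞) (fun p : (Fin n → ℝ) × ℝ => v p.1 p.2))
    (hdivfree : ∀ (x : Fin n → ℝ) (t : ℝ), dvg (fun y => v y t) x = 0)
    (hFP : ∀ (x : Fin n → ℝ), ∀ t ∈ Set.Icc (0 : ℝ) 1,
      deriv (fun s => ρ x s) t
        + dvg (fun y i => ρ y t * (pd (fun z => lam z t) i y + v y t i)) x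
        = (ε / 2) * lap (fun y => ρ y t) x)
    (hHJB : ∀ (x : Fin n → ℝ), ∀ t ∈ Set.Icc (0 : ℝ) 1,
      deriv (fun s => lam x s) t
        + (1 / 2) * ∑ i, (pd (fun y => lam y t) i x) ^ 2
        + ∑ i, pd (fun y => lam y t) i x * v x t i
        = -(ε / 2) * lap (fun y => lam y t) x)
    (φhat : (Fin n → ℝ) → ℝ → ℝ)
    (hφhat : ∀ x t, φhat x t = ρ x t * Real.exp (-(lam x t) / ε)) :
    ∀ (x : Fin n → ℝ), ∀ t ∈ Set.Icc (0 : ℝ) 1,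
      deriv (fun s => φhat x s) t
        = -(∑ i, pd (fun y => φhat y t) i x * v x t i)
          + (ε / 2) * lap (fun y => φhat y t) x := by
  intro x t ht
  have hε' : ε ≠ 0 := ne_of_gt hε
  -- spatial slices
  have hR : ContDiff ℝ (⊤ : ℕ∞) (fun y => ρ y t) := hρ.comp (contDiff_id.prodMk contDiff_const)
  have hL : ContDiff ℝ (⊤ : ℕ∞) (fun y => lam y t) := hlam.comp (contDiff_id.prodMk contDiff_const)
  have hVt : ContDiff ℝ (⊤ : ℕ∞) (fun y : Fin n → ℝ => v y t) := hv.comp (contDiff_id.prodMk contDiff_const)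
  have hVi : ∀ i, ContDiff ℝ (⊤ : ℕ∞) (fun y => v y t i) := fun i => (contDiff_pi.mp hVt) i
  -- time slices
  have hRs : ContDiff ℝ (⊤ : ℕ∞) (fun s => ρ x s) := hρ.comp (contDiff_const.prodMk contDiff_id)
  have hLs : ContDiff ℝ (⊤ : ℕ∞) (fun s => lam x s) := hlam.comp (contDiff_const.prodMk contDiff_id)
  -- rewrite φhat
  have hφf : (fun z => φhat z t) = fun z => ρ z t * Real.exp (-(lam z t) / ε) :=
    funext fun z => hφhat z t
  -- time derivative
  have hT : deriv (fun s => φhat x s) t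
      = deriv (fun s => ρ x s) t * Real.exp (-(lam x t) / ε)
        + ρ x t * (Real.exp (-(lam x t) / ε) * (-(deriv (fun s => lam x s) t) / ε)) := by
    have h1 : HasDerivAt (fun s => ρ x s) (deriv (fun s => ρ x s) t) t :=
      (hRs.differentiable (by simp) t).hasDerivAt
    have h2 : HasDerivAt (fun s => lam x s) (deriv (fun s => lam x s) t) t :=
      (hLs.differentiable (by simp) t).hasDerivAt
    have h3 : HasDerivAt (fun s => Real.exp (-(lam x s) / ε))
        (Real.exp (-(lam x t) / ε) * (-(deriv (fun s => lam x s) t) / ε)) t :=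
      ((h2.neg).div_const ε).exp
    have h4 := (h1.mul h3).deriv
    have h5 : (fun s => φhat x s) = fun s => ρ x s * Real.exp (-(lam x s) / ε) :=
      funext fun s => hφhat x s
    rw [h5]; exact h4
  rw [hT, hφf]
  simp only [lap]
  -- first sum
  have e1 : ∑ i, pd (fun z => ρ z t * Real.exp (-(lam z t) / ε)) i x * v x t i
      = (∑ i, pd (fun y => ρ y t) i x * v x t i) * Real.exp (-(lam x t) / ε)
        + (ρ x t * Real.exp (-(lam x t) / ε) * (-1 / ε))
            * ∑ i, pd (fun y => lam y t) i x * v x t i := by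
    calc ∑ i, pd (fun z => ρ z t * Real.exp (-(lam z t) / ε)) i x * v x t i
        = ∑ i, ((pd (fun y => ρ y t) i x * v x t i) * Real.exp (-(lam x t) / ε)
            + (ρ x t * Real.exp (-(lam x t) / ε) * (-1 / ε))
                * (pd (fun y => lam y t) i x * v x t i)) :=
          Finset.sum_congr rfl fun i _ => by
            rw [Dfirst ε (fun y => ρ y t) (fun y => lam y t) hR hL i x]; ring
      _ = _ := by rw [Finset.sum_add_distrib, ← Finset.sum_mul, ← Finset.mul_sum]
  -- second sum
  have e2 : ∑ i, pd (pd (fun z => ρ z t * Real.exp (-(lam z t) / ε)) i) i x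
      = Real.exp (-(lam x t) / ε) * (∑ i, pd (pd (fun y => ρ y t) i) i x)
        + (-2 * Real.exp (-(lam x t) / ε) / ε)
            * (∑ i, pd (fun y => ρ y t) i x * pd (fun y => lam y t) i x)
        + (Real.exp (-(lam x t) / ε) * ρ x t / ε ^ 2)
            * (∑ i, (pd (fun y => lam y t) i x) ^ 2)
        + (-(Real.exp (-(lam x t) / ε)) * ρ x t / ε)
            * (∑ i, pd (pd (fun y => lam y t) i) i x) := by
    calc ∑ i, pd (pd (fun z => ρ z t * Real.exp (-(lam z t) / ε)) i) i x
        = ∑ i, (Real.exp (-(lam x t) / ε) * pd (pd (fun y => ρ y t) i) i x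
            + (-2 * Real.exp (-(lam x t) / ε) / ε)
                * (pd (fun y => ρ y t) i x * pd (fun y => lam y t) i x)
            + (Real.exp (-(lam x t) / ε) * ρ x t / ε ^ 2) * (pd (fun y => lam y t) i x) ^ 2
            + (-(Real.exp (-(lam x t) / ε)) * ρ x t / ε) * pd (pd (fun y => lam y t) i) i x) :=
          Finset.sum_congr rfl fun i _ => by
            rw [Dsecond ε (fun y => ρ y t) (fun y => lam y t) hR hL i x]; ring
      _ = _ := by
          rw [Finset.sum_add_distrib, Finset.sum_add_distrib, Finset.sum_add_distrib,
            ← Finset.mul_sum, ← Finset.mul_sum, ← Finset.mul_sum, ← Finset.mul_sum]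
  rw [e1, e2]
  -- expand FP divergence
  have hFPx := hFP x t ht
  have hdiv : (∑ i, pd (fun y => v y t i) i x) = 0 := by
    have := hdivfree x t
    simpa [dvg] using this
  have hdvg : dvg (fun y i => ρ y t * (pd (fun z => lam z t) i y + v y t i)) x
      = (∑ i, pd (fun y => ρ y t) i x * pd (fun y => lam y t) i x)
        + (∑ i, pd (fun y => ρ y t) i x * v x t i)
        + ρ x t * (∑ i, pd (pd (fun y => lam y t) i) i x) := by
    unfold dvg
    have step : ∀ i : Fin n, pd (fun y => ρ y t * (pd (fun z => lam z t) i y + v y t i)) i x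
        = pd (fun y => ρ y t) i x * pd (fun y => lam y t) i x
          + pd (fun y => ρ y t) i x * v x t i
          + ρ x t * (pd (pd (fun y => lam y t) i) i x + pd (fun y => v y t i) i x) := by
      intro i
      have hli : ContDiff ℝ (⊤ : ℕ∞) (pd (fun y => lam y t) i) := contDiff_pd hL i
      rw [pd_mul (hR.differentiable (by simp) x) ((hli.add (hVi i)).differentiable (by simp) x),
        pd_add (hli.differentiable (by simp) x) ((hVi i).differentiable (by simp) x)]
      ring
    calc ∑ i, pd (fun y => (fun y i => ρ y t * (pd (fun z => lam z t) i y + v y t i)) y i) i x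
        = ∑ i, ((pd (fun y => ρ y t) i x * pd (fun y => lam y t) i x
            + pd (fun y => ρ y t) i x * v x t i
            + ρ x t * pd (pd (fun y => lam y t) i) i x)
            + ρ x t * pd (fun y => v y t i) i x) :=
          Finset.sum_congr rfl fun i _ => by rw [step i]; ring
      _ = ∑ i, (pd (fun y => ρ y t) i x * pd (fun y => lam y t) i x
            + pd (fun y => ρ y t) i x * v x t i
            + ρ x t * pd (pd (fun y => lam y t) i) i x)
            + ∑ i, ρ x t * pd (fun y => v y t i) i x := Finset.sum_add_distrib
      _ = _ := by
          rw [← Finset.mul_sum, hdiv, mul_zero, add_zero, Finset.sum_add_distrib,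
            Finset.sum_add_distrib, ← Finset.mul_sum]
  rw [hdvg] at hFPx
  simp only [lap] at hFPx
  have hHJBx := hHJB x t ht
  simp only [lap] at hHJBx
  -- final algebra
  have h1 : deriv (fun s => ρ x s) t
      = (ε / 2) * (∑ i, pd (pd (fun y => ρ y t) i) i x)
        - (∑ i, pd (fun y => ρ y t) i x * pd (fun y => lam y t) i x)
        - (∑ i, pd (fun y => ρ y t) i x * v x t i)
        - ρ x t * (∑ i, pd (pd (fun y => lam y t) i) i x) := by linarith
  have h2 : deriv (fun s => lam x s) t
      = -(ε / 2) * (∑ i, pd (pd (fun y => lam y t) i) i x)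
        - (1 / 2) * (∑ i, (pd (fun y => lam y t) i x) ^ 2)
        - (∑ i, pd (fun y => lam y t) i x * v x t i) := by linarith
  rw [h1, h2]
  field_simp
  ring
end

section
/- For a row-stochastic-like positive linear map: if A is an N×N matrix with strictly positive entries, then A maps the positive cone into itself and is a strict contraction in the Hilbert projective metric, with contraction coefficient tanh(Δ(A)/4) < 1 where Δ(A) = max_{i,j,k,l} log((A_{ik}A_{jl})/(A_{jk}A_{il})) is the projective diameter of the image. -/
/-- Hilbert's projective (pseudo)metric on the positive cone of `ℝ^N`. -/
noncomputable def hilbertDist {N : ℕ} (x y : Fin N → ℝ) : ℝ :=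
  Real.log ((⨆ i, x i / y i) / (⨅ i, x i / y i))

/-- Projective diameter of the image of a positive matrix `A`:
`Δ(A) = max_{i,j,k,l} log((A_{ik} A_{jl})/(A_{jk} A_{il}))`. -/
noncomputable def projDiam {N : ℕ} (A : Matrix (Fin N) (Fin N) ℝ) : ℝ :=
  ⨆ i, ⨆ j, ⨆ k, ⨆ l, Real.log ((A i k * A j l) / (A j k * A i l))

/-!
Fix two rows `i, j` of `A` and let `m ≤ x / y ≤ M` coordinatewise. The nonnegative vectors
`x - m y` and `M y - x` express both `x` and `y`, which reduces the bound on
`(Ax)_i (Ay)_j / ((Ax)_j (Ay)_i)` to a two-dimensional inequality whose cross ratio is at most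
`e^Δ`. After taking square roots and applying AM-GM to the cross terms, it becomes
`e^t ξ + η ≤ e^{τ t} (e^t η + ξ)` for `0 ≤ ξ ≤ e^{2u} η`, where `t = log (M / m) / 2`,
`u = Δ / 4` and `τ = tanh u`. This is affine in `ξ`, so only `ξ = e^{2u} η` matters, where it
reads `cosh (t/2 + u) ≤ e^{τ t} cosh (t/2 - u)`. That follows by integrating
`tanh (z + u) - tanh (z - u) ≤ 2 tanh u`, whose left side is
`sinh 2u / (cosh² u + sinh² z)`.
-/

open Real

namespace Real

theorem tanh_nonneg {u : ℝ} (hu : 0 ≤ u) : 0 ≤ tanh u := by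
  rw [tanh_eq_sinh_div_cosh]
  exact div_nonneg (sinh_nonneg_iff.mpr hu) (cosh_pos u).le

theorem tanh_add_sub_tanh_sub_le {u : ℝ} (hu : 0 ≤ u) (z : ℝ) :
    tanh (z + u) - tanh (z - u) ≤ 2 * tanh u := by
  have hnum : sinh (z + u) * cosh (z - u) - cosh (z + u) * sinh (z - u)
      = 2 * sinh u * cosh u := by
    rw [← sinh_sub, ← sinh_two_mul]; ring_nf
  have hden : cosh u ^ 2 ≤ cosh (z + u) * cosh (z - u) := by
    rw [cosh_add, cosh_sub]
    nlinarith [cosh_sq_sub_sinh_sq z, cosh_sq_sub_sinh_sq u, sq_nonneg (sinh z)]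
  calc tanh (z + u) - tanh (z - u)
      = 2 * sinh u * cosh u / (cosh (z + u) * cosh (z - u)) := by
        rw [tanh_eq_sinh_div_cosh, tanh_eq_sinh_div_cosh,
          div_sub_div _ _ (cosh_pos _).ne' (cosh_pos _).ne', hnum]
    _ ≤ 2 * sinh u * cosh u / cosh u ^ 2 := by
        have := sinh_nonneg_iff.mpr hu
        have := cosh_pos u
        gcongr
    _ = 2 * tanh u := by
        rw [tanh_eq_sinh_div_cosh]; field_simp

theorem hasDerivAt_log_cosh_add (c w : ℝ) :
    HasDerivAt (fun w => log (cosh (w + c))) (tanh (w + c)) w := by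
  simpa [tanh_eq_sinh_div_cosh] using
    ((hasDerivAt_id w).add_const c).cosh.log (cosh_pos _).ne'

theorem log_cosh_add_sub_log_cosh_sub_le {u z : ℝ} (hu : 0 ≤ u) (hz : 0 ≤ z) :
    log (cosh (z + u)) - log (cosh (z - u)) ≤ 2 * tanh u * z := by
  have hg (w : ℝ) := (hasDerivAt_log_cosh_add u w).sub (hasDerivAt_log_cosh_add (-u) w)
  have hg' (w : ℝ) : tanh (w + u) - tanh (w + -u) ≤ 2 * tanh u := by
    simpa [sub_eq_add_neg] using tanh_add_sub_tanh_sub_le hu w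
  have := image_sub_le_mul_sub_of_deriv_le (fun w => (hg w).differentiableAt)
    (fun w => (hg w).deriv.trans_le (hg' w)) hz
  simpa [sub_eq_add_neg] using this

theorem two_mul_exp_mul_cosh (a b : ℝ) : 2 * exp a * cosh b = exp (a + b) + exp (a - b) := by
  rw [cosh_eq, sub_eq_add_neg, exp_add, exp_add]; ring

theorem exp_add_two_mul_add_one_le {u x : ℝ} (hu : 0 ≤ u) (hx : 0 ≤ x) :
    exp (x + 2 * u) + 1 ≤ exp (tanh u * x) * (exp x + exp (2 * u)) := by
  have hcosh : cosh (x / 2 + u) ≤ exp (tanh u * x) * cosh (x / 2 - u) := by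
    have h := log_cosh_add_sub_log_cosh_sub_le hu (by positivity : 0 ≤ x / 2)
    rw [sub_le_iff_le_add, ← exp_le_exp, exp_add, exp_log (cosh_pos _), exp_log (cosh_pos _),
      show 2 * tanh u * (x / 2) = tanh u * x by ring] at h
    exact h
  have e₁ := two_mul_exp_mul_cosh (x / 2 + u) (x / 2 + u)
  have e₂ := two_mul_exp_mul_cosh (x / 2 + u) (x / 2 - u)
  rw [show x / 2 + u + (x / 2 + u) = x + 2 * u by ring, sub_self, exp_zero] at e₁
  rw [show x / 2 + u + (x / 2 - u) = x by ring, show x / 2 + u - (x / 2 - u) = 2 * u by ring] at e₂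
  rw [← e₁, ← e₂, mul_left_comm]
  exact mul_le_mul_of_nonneg_left hcosh (by positivity)

theorem exp_mul_add_le_exp_tanh_mul {u x ξ η : ℝ} (hu : 0 ≤ u) (hx : 0 ≤ x) (hξ : 0 ≤ ξ)
    (hξη : ξ ≤ exp (2 * u) * η) :
    exp x * ξ + η ≤ exp (tanh u * x) * (exp x * η + ξ) := by
  have hη : 0 ≤ η := (mul_nonneg_iff_of_pos_left (exp_pos _)).mp (hξ.trans hξη)
  have hslope : exp (tanh u * x) ≤ exp x :=
    exp_le_exp.mpr (mul_le_of_le_one_left hx (tanh_lt_one u).le)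
  have hend := exp_add_two_mul_add_one_le hu hx
  rw [exp_add] at hend
  nlinarith [mul_le_mul_of_nonneg_left hξη (sub_nonneg.mpr hslope),
    mul_le_mul_of_nonneg_left hend hη]

end Real

theorem birkhoff_two_dim {u δ a₀ a₁ b₀ b₁ : ℝ} (hu : 0 ≤ u) (hδ : 0 ≤ δ)
    (ha₀ : 0 ≤ a₀) (ha₁ : 0 ≤ a₁) (hb₀ : 0 ≤ b₀) (hb₁ : 0 ≤ b₁)
    (h : a₁ * b₀ ≤ exp (4 * u) * (b₁ * a₀)) :
    (exp δ * a₁ + a₀) * (b₁ + b₀) ≤ exp (tanh u * δ) * ((exp δ * b₁ + b₀) * (a₁ + a₀)) := by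
  obtain ⟨α₀, hα₀, rfl⟩ : ∃ α, 0 ≤ α ∧ α ^ 2 = a₀ := ⟨√a₀, sqrt_nonneg _, sq_sqrt ha₀⟩
  obtain ⟨α₁, hα₁, rfl⟩ : ∃ α, 0 ≤ α ∧ α ^ 2 = a₁ := ⟨√a₁, sqrt_nonneg _, sq_sqrt ha₁⟩
  obtain ⟨β₀, hβ₀, rfl⟩ : ∃ β, 0 ≤ β ∧ β ^ 2 = b₀ := ⟨√b₀, sqrt_nonneg _, sq_sqrt hb₀⟩
  obtain ⟨β₁, hβ₁, rfl⟩ : ∃ β, 0 ≤ β ∧ β ^ 2 = b₁ := ⟨√b₁, sqrt_nonneg _, sq_sqrt hb₁⟩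
  have hsqrt : α₁ * β₀ ≤ exp (2 * u) * (β₁ * α₀) := by
    have h4 : exp (4 * u) = exp (2 * u) ^ 2 := by rw [← exp_nat_mul]; ring_nf
    rw [← pow_le_pow_iff_left₀ (by positivity) (by positivity) two_ne_zero]
    calc (α₁ * β₀) ^ 2 = α₁ ^ 2 * β₀ ^ 2 := by ring
      _ ≤ exp (4 * u) * (β₁ ^ 2 * α₀ ^ 2) := h
      _ = (exp (2 * u) * (β₁ * α₀)) ^ 2 := by rw [h4]; ring
  have hlin := exp_mul_add_le_exp_tanh_mul hu (by positivity : 0 ≤ δ / 2)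
    (mul_nonneg hα₁ hβ₀) hsqrt
  have hE : exp (δ / 2) ^ 2 = exp δ := by rw [← exp_nat_mul]; ring_nf
  have hF : exp (tanh u * (δ / 2)) ^ 2 = exp (tanh u * δ) := by rw [← exp_nat_mul]; ring_nf
  have hF₁ : 1 ≤ exp (tanh u * (δ / 2)) ^ 2 :=
    one_le_pow₀ (one_le_exp (mul_nonneg (tanh_nonneg hu) (by positivity)))
  rw [← hE, ← hF]
  nlinarith [pow_le_pow_left₀ (by positivity) hlin 2,
    mul_nonneg (sub_nonneg.mpr hF₁) (sq_nonneg (exp (δ / 2) * α₁ * β₁ - α₀ * β₀))]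

theorem dotProduct_mul_dotProduct_le_of_cross {ι : Type*} [Fintype ι] {p q v w : ι → ℝ} {K : ℝ}
    (hpq : ∀ k l, p k * q l ≤ K * (q k * p l)) (hv : 0 ≤ v) (hw : 0 ≤ w) :
    (p ⬝ᵥ v) * (q ⬝ᵥ w) ≤ K * ((q ⬝ᵥ v) * (p ⬝ᵥ w)) := by
  simp only [dotProduct]
  rw [Finset.sum_mul_sum, Finset.sum_mul_sum, Finset.mul_sum]
  refine Finset.sum_le_sum fun k _ => ?_
  rw [Finset.mul_sum]
  refine Finset.sum_le_sum fun l _ => ?_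
  calc p k * v k * (q l * w l) = p k * q l * (v k * w l) := by ring
    _ ≤ K * (q k * p l) * (v k * w l) :=
        mul_le_mul_of_nonneg_right (hpq k l) (mul_nonneg (hv k) (hw l))
    _ = K * (q k * v k * (p l * w l)) := by ring

theorem birkhoff_two_rows {ι : Type*} [Fintype ι] {p q x y : ι → ℝ} {u m M : ℝ}
    (hp : 0 ≤ p) (hq : 0 ≤ q) (hpq : ∀ k l, p k * q l ≤ exp (4 * u) * (q k * p l))
    (hu : 0 ≤ u) (hm : 0 < m) (hmM : m ≤ M) (hxm : m • y ≤ x) (hxM : x ≤ M • y) :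
    (p ⬝ᵥ x) * (q ⬝ᵥ y) ≤ exp (tanh u * log (M / m)) * ((q ⬝ᵥ x) * (p ⬝ᵥ y)) := by
  rcases hmM.eq_or_lt with rfl | hmM
  · obtain rfl : x = m • y := le_antisymm hxM hxm
    simp only [dotProduct_smul, smul_eq_mul, div_self hm.ne', log_one, mul_zero, exp_zero,
      one_mul]
    exact le_of_eq (by ring)
  obtain ⟨δ, hδ, rfl⟩ : ∃ δ, 0 ≤ δ ∧ m * exp δ = M :=
    ⟨log (M / m), log_nonneg ((one_le_div hm).mpr hmM.le),
      by rw [exp_log (div_pos (hm.trans hmM) hm)]; field_simp⟩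
  set w₁ := x - m • y
  set w₀ := (m * exp δ) • y - x
  have hw₁ : 0 ≤ w₁ := sub_nonneg.mpr hxm
  have hw₀ : 0 ≤ w₀ := sub_nonneg.mpr hxM
  have decomp (r : ι → ℝ) : (m * exp δ - m) * (r ⬝ᵥ x) = m * (exp δ * (r ⬝ᵥ w₁) + r ⬝ᵥ w₀) ∧
      (m * exp δ - m) * (r ⬝ᵥ y) = r ⬝ᵥ w₁ + r ⬝ᵥ w₀ := by
    simp only [w₁, w₀, dotProduct_sub, dotProduct_smul, smul_eq_mul]
    constructor <;> ring
  obtain ⟨hpx, hpy⟩ := decomp p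
  obtain ⟨hqx, hqy⟩ := decomp q
  have key := birkhoff_two_dim hu hδ (dotProduct_nonneg_of_nonneg hp hw₀)
    (dotProduct_nonneg_of_nonneg hp hw₁) (dotProduct_nonneg_of_nonneg hq hw₀)
    (dotProduct_nonneg_of_nonneg hq hw₁) (dotProduct_mul_dotProduct_le_of_cross hpq hw₁ hw₀)
  rw [mul_div_cancel_left₀ _ hm.ne', log_exp]
  refine le_of_mul_le_mul_left ?_ (pow_pos (sub_pos.mpr hmM) 2)
  rw [← hpy, ← hqy] at key
  linear_combination m * key - (exp (tanh u * δ) * (m * exp δ - m) * (p ⬝ᵥ y)) * hqx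
    + ((m * exp δ - m) * (q ⬝ᵥ y)) * hpx

theorem log_cross_ratio_le_projDiam {N : ℕ} (A : Matrix (Fin N) (Fin N) ℝ) (i j k l : Fin N) :
    log ((A i k * A j l) / (A j k * A i l)) ≤ projDiam A := by
  exact le_ciSup_of_le (Set.finite_range _).bddAbove i <|
    le_ciSup_of_le (Set.finite_range _).bddAbove j <|
    le_ciSup_of_le (Set.finite_range _).bddAbove k <|
    le_ciSup (f := fun l => log ((A i k * A j l) / (A j k * A i l))) (Set.finite_range _).bddAbove l

theorem projDiam_nonneg {N : ℕ} [NeZero N] (A : Matrix (Fin N) (Fin N) ℝ) : 0 ≤ projDiam A := by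
  simpa using log_cross_ratio_le_projDiam A 0 0 0 0

theorem mul_le_exp_projDiam_mul {N : ℕ} {A : Matrix (Fin N) (Fin N) ℝ} (hA : ∀ i j, 0 < A i j)
    (i j k l : Fin N) : A i k * A j l ≤ exp (projDiam A) * (A j k * A i l) := by
  have hden : 0 < A j k * A i l := mul_pos (hA j k) (hA i l)
  rw [← div_le_iff₀ hden, ← log_le_iff_le_exp (div_pos (mul_pos (hA i k) (hA j l)) hden)]
  exact log_cross_ratio_le_projDiam A i j k l

theorem mulVec_pos {m n : Type*} [Fintype n] [Nonempty n] {A : Matrix m n ℝ}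
    (hA : ∀ i j, 0 < A i j) {x : n → ℝ} (hx : ∀ j, 0 < x j) (i : m) : 0 < A.mulVec x i :=
  Finset.sum_pos (fun j _ => mul_pos (hA i j) (hx j)) Finset.univ_nonempty

section RatioBounds

variable {ι : Type*} [Finite ι] {x y : ι → ℝ}

theorem iInf_div_smul_le (hy : ∀ i, 0 < y i) : (⨅ i, x i / y i) • y ≤ x := fun k => by
  have := ciInf_le (Finite.bddBelow_range fun i => x i / y i) k
  rwa [le_div_iff₀ (hy k)] at this

theorem le_iSup_div_smul (hy : ∀ i, 0 < y i) : x ≤ (⨆ i, x i / y i) • y := fun k => by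
  have := le_ciSup (Finite.bddAbove_range fun i => x i / y i) k
  rwa [div_le_iff₀ (hy k)] at this

theorem iInf_div_pos [Nonempty ι] (hx : ∀ i, 0 < x i) (hy : ∀ i, 0 < y i) :
    0 < ⨅ i, x i / y i := by
  obtain ⟨i, hi⟩ := exists_eq_ciInf_of_finite (f := fun i => x i / y i)
  exact hi ▸ div_pos (hx i) (hy i)

end RatioBounds

theorem hilbertDist_le_of_forall_mul_le {N : ℕ} [NeZero N] {x y : Fin N → ℝ} {c : ℝ}
    (hx : ∀ i, 0 < x i) (hy : ∀ i, 0 < y i) (h : ∀ i j, x i * y j ≤ exp c * (x j * y i)) :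
    hilbertDist x y ≤ c := by
  obtain ⟨i, hi⟩ := exists_eq_ciSup_of_finite (f := fun i => x i / y i)
  obtain ⟨j, hj⟩ := exists_eq_ciInf_of_finite (f := fun i => x i / y i)
  have hden : 0 < y i * x j := mul_pos (hy i) (hx j)
  rw [hilbertDist, ← hi, ← hj, div_div_div_eq,
    log_le_iff_le_exp (div_pos (mul_pos (hx i) (hy j)) hden), div_le_iff₀ hden, mul_comm (y i)]
  exact h i j

/-- Birkhoff's contraction theorem: a matrix `A` with strictly
positive entries maps the positive cone into itself and is a strict
contraction in the Hilbert projective metric, with contraction coefficient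
`tanh(Δ(A)/4) < 1`. -/
theorem stmt18 {N : ℕ} (hN : 0 < N) (A : Matrix (Fin N) (Fin N) ℝ)
    (hA : ∀ i j, 0 < A i j) :
    (∀ x : Fin N → ℝ, (∀ i, 0 < x i) → ∀ i, 0 < A.mulVec x i) ∧
      Real.tanh (projDiam A / 4) < 1 ∧
      (∀ x y : Fin N → ℝ, (∀ i, 0 < x i) → (∀ i, 0 < y i) →
        hilbertDist (A.mulVec x) (A.mulVec y)
          ≤ Real.tanh (projDiam A / 4) * hilbertDist x y) := by
  have : NeZero N := ⟨hN.ne'⟩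
  refine ⟨fun x hx => mulVec_pos hA hx, tanh_lt_one _, fun x y hx hy => ?_⟩
  have hcross (i j k l : Fin N) :
      A i k * A j l ≤ exp (4 * (projDiam A / 4)) * (A j k * A i l) := by
    rw [mul_div_cancel₀ _ four_ne_zero]
    exact mul_le_exp_projDiam_mul hA i j k l
  refine hilbertDist_le_of_forall_mul_le (mulVec_pos hA hx) (mulVec_pos hA hy) fun i j => ?_
  exact birkhoff_two_rows (fun k => (hA i k).le) (fun k => (hA j k).le) (hcross i j)
    (by linarith [projDiam_nonneg A]) (iInf_div_pos hx hy)
    (ciInf_le_ciSup (Finite.bddBelow_range _) (Finite.bddAbove_range _))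
    (iInf_div_smul_le hy) (le_iSup_div_smul hy)
end
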